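/- Let c ≥ 1 be a real number and set ι(t) = log(c·(t+1)·(t+2)) for integers t ≥ 1. Then for every integer t ≥ 1, one has √(ι(t)/t) ≤ Σ_{i=1}^t α_t^i · √(ι(i)/i) ≤ 2·√(ι(t)/t). -/

import Mathlib

/-- Learning rate `α_t = (H+1)/(H+t)`. -/
noncomputable def lr (H : ℕ) (t : ℕ) : ℝ := ((H : ℝ) + 1) / ((H : ℝ) + t)

/-- Weights `α_t^0 = ∏_{j=1}^t (1 - α_j)` and `α_t^i = α_i ∏_{j=i+1}^t (1 - α_j)` for `i ≥ 1`. -/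
noncomputable def alphaW (H : ℕ) (t i : ℕ) : ℝ :=
  if i = 0 then ∏ j ∈ Finset.Icc 1 t, (1 - lr H j)
  else lr H i * ∏ j ∈ Finset.Icc (i + 1) t, (1 - lr H j)

/-!
The weights `α_t^i`, `1 ≤ i ≤ t`, are nonnegative and sum to one, so the lower bound follows from
`ι(t)/t` being antitone: `ι(t+1) - ι(t) = log((t+3)/(t+1)) ≤ 2/(t+1)` while
`ι(t) ≥ log(t+1) + log(t+2) ≥ 2t/(t+1)`. For the upper bound, `ι` is monotone, so the sum is at most
`√ι(t) · ∑ α_t^i / √i`, and `∑ α_t^i / √i ≤ 2/√t` by induction on `t` through the recursion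
`α_{t+1}^i = (1 - α_{t+1}) α_t^i`; the inductive step is the AM-GM inequality `2√t √(t+1) ≤ 2t + 1`.
-/

open Finset Real

section Weights

variable (H : ℕ)

lemma lr_nonneg (t : ℕ) : 0 ≤ lr H t := by
  unfold lr; positivity

lemma lr_succ (t : ℕ) : lr H (t + 1) = (H + 1) / (H + t + 1) := by
  unfold lr; push_cast; ring_nf

lemma lr_one : lr H 1 = 1 := by
  rw [lr_succ, Nat.cast_zero, add_zero, div_self (by positivity)]

lemma one_sub_lr_succ (t : ℕ) : 1 - lr H (t + 1) = t / (H + t + 1) := by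
  rw [lr_succ, eq_div_iff (by positivity), sub_mul, div_mul_cancel₀ _ (by positivity)]
  ring

lemma one_sub_lr_nonneg {t : ℕ} (ht : 1 ≤ t) : 0 ≤ 1 - lr H t := by
  obtain ⟨s, rfl⟩ := Nat.exists_eq_add_of_le' ht
  rw [one_sub_lr_succ]
  positivity

lemma alphaW_nonneg (t i : ℕ) : 0 ≤ alphaW H t i := by
  have hprod (k : ℕ) : 0 ≤ ∏ j ∈ Icc (k + 1) t, (1 - lr H j) :=
    prod_nonneg fun j hj => one_sub_lr_nonneg H (by grind)
  unfold alphaW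
  split_ifs
  · exact hprod 0
  · exact mul_nonneg (lr_nonneg H i) (hprod i)

lemma alphaW_self (t : ℕ) : alphaW H t t = if t = 0 then 1 else lr H t := by
  unfold alphaW
  split_ifs with h
  · simp [h]
  · rw [Icc_eq_empty (by omega), prod_empty, mul_one]

lemma alphaW_succ {t i : ℕ} (hi : i ≠ 0) (hit : i ≤ t) :
    alphaW H (t + 1) i = (1 - lr H (t + 1)) * alphaW H t i := by
  unfold alphaW
  rw [if_neg hi, if_neg hi, prod_Icc_succ_top (by omega)]
  ring

lemma sum_alphaW_mul_succ (t : ℕ) (f : ℕ → ℝ) :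
    ∑ i ∈ Icc 1 (t + 1), alphaW H (t + 1) i * f i
      = (1 - lr H (t + 1)) * ∑ i ∈ Icc 1 t, alphaW H t i * f i + lr H (t + 1) * f (t + 1) := by
  rw [sum_Icc_succ_top (by omega), alphaW_self, if_neg (by omega), mul_sum]
  congr 1
  refine sum_congr rfl fun i hi => ?_
  rw [alphaW_succ H (by grind) (mem_Icc.1 hi).2, mul_assoc]

lemma sum_alphaW_eq_one {t : ℕ} (ht : 1 ≤ t) : ∑ i ∈ Icc 1 t, alphaW H t i = 1 := by
  induction t, ht using Nat.le_induction with
  | base => simp [alphaW_self, lr_one]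
  | succ t _ ih =>
    have h := sum_alphaW_mul_succ H t fun _ => 1
    simp only [mul_one] at h
    rw [h, ih]
    ring

lemma le_sum_alphaW_mul {t : ℕ} (ht : 1 ≤ t) {g : ℕ → ℝ} (hg : ∀ i ∈ Icc 1 t, g t ≤ g i) :
    g t ≤ ∑ i ∈ Icc 1 t, alphaW H t i * g i :=
  calc g t = ∑ i ∈ Icc 1 t, alphaW H t i * g t := by
        rw [← sum_mul, sum_alphaW_eq_one H ht, one_mul]
    _ ≤ _ := sum_le_sum fun i hi => mul_le_mul_of_nonneg_left (hg i hi) (alphaW_nonneg H t i)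

lemma one_sub_lr_mul_add_lr_le {t : ℕ} (ht : 1 ≤ t) :
    (1 - lr H (t + 1)) * (2 / √t) + lr H (t + 1) * (1 / √((t + 1 : ℕ) : ℝ))
      ≤ 2 / √((t + 1 : ℕ) : ℝ) := by
  rw [one_sub_lr_succ, lr_succ]
  push_cast
  have hs : 0 < √(t : ℝ) := sqrt_pos.2 (by exact_mod_cast ht)
  have hs' : 0 < √((t : ℝ) + 1) := sqrt_pos.2 (by positivity)
  have hs2 : √(t : ℝ) ^ 2 = t := sq_sqrt (by positivity)
  have hs2' : √((t : ℝ) + 1) ^ 2 = t + 1 := sq_sqrt (by positivity)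
  have amgm : 2 * √(t : ℝ) * √((t : ℝ) + 1) ≤ 2 * t + 1 := by
    nlinarith [sq_nonneg (√(t : ℝ) - √((t : ℝ) + 1))]
  set s := √(t : ℝ)
  set s' := √((t : ℝ) + 1)
  have hlhs : t / (H + t + 1) * (2 / s) + (H + 1) / (H + t + 1) * (1 / s')
      = (2 * s * s' + (H + 1)) / ((H + t + 1) * s') := by
    rw [← hs2]
    field_simp
  rw [hlhs, div_le_div_iff₀ (by positivity) hs']
  nlinarith

lemma sum_alphaW_div_sqrt_le {t : ℕ} (ht : 1 ≤ t) :
    ∑ i ∈ Icc 1 t, alphaW H t i * (1 / √i) ≤ 2 / √t := by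
  induction t, ht using Nat.le_induction with
  | base => simp [alphaW_self, lr_one]
  | succ t ht ih =>
    rw [sum_alphaW_mul_succ]
    calc _ ≤ (1 - lr H (t + 1)) * (2 / √t) + lr H (t + 1) * (1 / √((t + 1 : ℕ) : ℝ)) := by
          gcongr
          exact one_sub_lr_nonneg H (by omega)
      _ ≤ _ := one_sub_lr_mul_add_lr_le H ht

end Weights

section Iota

variable {c : ℝ}

noncomputable def iota (c : ℝ) (t : ℕ) : ℝ := log (c * ((t : ℝ) + 1) * ((t : ℝ) + 2))

lemma iota_eq (hc : 0 < c) (t : ℕ) : iota c t = log c + log ((t : ℝ) + 1) + log ((t : ℝ) + 2) := by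
  rw [iota, log_mul (by positivity) (by positivity), log_mul hc.ne' (by positivity)]

lemma iota_monotone (hc : 0 < c) : Monotone (iota c) := fun i t hit => by
  have : (i : ℝ) ≤ t := by exact_mod_cast hit
  unfold iota
  gcongr

lemma iota_succ_sub_le (hc : 0 < c) (t : ℕ) : iota c (t + 1) - iota c t ≤ 2 / ((t : ℝ) + 1) := by
  have hratio : c * ((t : ℝ) + 1 + 1) * ((t : ℝ) + 1 + 2) / (c * ((t : ℝ) + 1) * ((t : ℝ) + 2)) - 1
      = 2 / ((t : ℝ) + 1) := by
    field_simp
    ring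
  rw [iota, iota, ← log_div (by positivity) (by positivity), ← hratio]
  push_cast
  exact log_le_sub_one_of_pos (by positivity)

lemma two_mul_div_le_iota (hc : 1 ≤ c) (t : ℕ) : 2 * t / ((t : ℝ) + 1) ≤ iota c t := by
  have h1 := one_sub_inv_le_log_of_pos (x := (t : ℝ) + 1) (by positivity)
  have h2 := one_sub_inv_le_log_of_pos (x := (t : ℝ) + 2) (by positivity)
  have h3 : ((t : ℝ) + 2)⁻¹ ≤ ((t : ℝ) + 1)⁻¹ := by gcongr; linarith
  have h4 : 2 * t / ((t : ℝ) + 1) = 2 * (1 - ((t : ℝ) + 1)⁻¹) := by field_simp; ring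
  rw [iota_eq (by linarith), h4]
  linarith [log_nonneg hc]

lemma iota_succ_div_le (hc : 1 ≤ c) {t : ℕ} (ht : 1 ≤ t) :
    iota c (t + 1) / (t + 1 : ℕ) ≤ iota c t / t := by
  have ht' : (0 : ℝ) < t := by exact_mod_cast ht
  rw [div_le_div_iff₀ (by positivity) ht']
  calc iota c (t + 1) * t ≤ (iota c t + 2 / ((t : ℝ) + 1)) * t := by
        gcongr
        linarith [iota_succ_sub_le (by linarith) t]
    _ = iota c t * t + 2 * t / ((t : ℝ) + 1) := by ring
    _ ≤ iota c t * (t + 1 : ℕ) := by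
        push_cast
        linarith [two_mul_div_le_iota hc t]

lemma iota_div_antitoneOn (hc : 1 ≤ c) : AntitoneOn (fun t => iota c t / t) {t | 1 ≤ t} :=
  antitoneOn_nat_Ici_of_succ_le fun _ ht => iota_succ_div_le hc ht

end Iota

theorem alphaW_iota_sum_general (H : ℕ) (c : ℝ) (hc : 1 ≤ c) (t : ℕ) (ht : 1 ≤ t) :
    Real.sqrt (Real.log (c * ((t : ℝ) + 1) * ((t : ℝ) + 2)) / t) ≤
      (∑ i ∈ Finset.Icc 1 t,
        alphaW H t i * Real.sqrt (Real.log (c * ((i : ℝ) + 1) * ((i : ℝ) + 2)) / i)) ∧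
    (∑ i ∈ Finset.Icc 1 t,
        alphaW H t i * Real.sqrt (Real.log (c * ((i : ℝ) + 1) * ((i : ℝ) + 2)) / i)) ≤
      2 * Real.sqrt (Real.log (c * ((t : ℝ) + 1) * ((t : ℝ) + 2)) / t) := by
  change √(iota c t / t) ≤ ∑ i ∈ Icc 1 t, alphaW H t i * √(iota c i / i) ∧
    ∑ i ∈ Icc 1 t, alphaW H t i * √(iota c i / i) ≤ 2 * √(iota c t / t)
  refine ⟨le_sum_alphaW_mul H ht (g := fun i => √(iota c i / i)) fun i hi => ?_, ?_⟩
  · exact sqrt_le_sqrt (iota_div_antitoneOn hc (mem_Icc.1 hi).1 ht (mem_Icc.1 hi).2)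
  calc ∑ i ∈ Icc 1 t, alphaW H t i * √(iota c i / i)
      ≤ ∑ i ∈ Icc 1 t, alphaW H t i * (√(iota c t) * (1 / √i)) := by
        refine sum_le_sum fun i hi => mul_le_mul_of_nonneg_left ?_ (alphaW_nonneg H t i)
        rw [sqrt_div' _ i.cast_nonneg, div_eq_mul_one_div]
        gcongr
        exact iota_monotone (by linarith) (mem_Icc.1 hi).2
    _ = √(iota c t) * ∑ i ∈ Icc 1 t, alphaW H t i * (1 / √i) := by
        rw [mul_sum]
        exact sum_congr rfl fun i _ => by ring
    _ ≤ √(iota c t) * (2 / √t) := by gcongr; exact sum_alphaW_div_sqrt_le H ht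
    _ = 2 * √(iota c t / t) := by rw [sqrt_div' _ t.cast_nonneg]; ring

/-- with `ι(t) = log(c (t+1) (t+2))`,
`√(ι(t)/t) ≤ ∑_{i=1}^t α_t^i √(ι(i)/i) ≤ 2 √(ι(t)/t)` for all `t ≥ 1`. -/
theorem alphaW_iota_sum (H : ℕ) (hH : 1 ≤ H) (c : ℝ) (hc : 1 ≤ c) (t : ℕ) (ht : 1 ≤ t) :
    Real.sqrt (Real.log (c * ((t : ℝ) + 1) * ((t : ℝ) + 2)) / t) ≤
      (∑ i ∈ Finset.Icc 1 t,
        alphaW H t i * Real.sqrt (Real.log (c * ((i : ℝ) + 1) * ((i : ℝ) + 2)) / i)) ∧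
    (∑ i ∈ Finset.Icc 1 t,
        alphaW H t i * Real.sqrt (Real.log (c * ((i : ℝ) + 1) * ((i : ℝ) + 2)) / i)) ≤
      2 * Real.sqrt (Real.log (c * ((t : ℝ) + 1) * ((t : ℝ) + 2)) / t) :=
  alphaW_iota_sum_general H c hc t ht
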